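/- If Φ(S) = Σ_{i∈N} ξ_{i,s_i} where ξ_{i,s_i} = δ_{i,s_i} + (t_c - t_{i,s_i}) with t_c = max_{j∈N} t_{j,s_j}, and each agent's cost is u(s_i, S_{-i}) = δ_{i,s_i} + N·t_c - t_{i,s_i}, then for any agent i and any unilateral strategy change from s_i to s_i', the change in cost equals the change in potential: u(s_i', S_{-i}) - u(s_i, S_{-i}) = Φ(S') - Φ(S), where S' = S_{-i} ∪ {s_i'}. That is, the game is an exact potential game. -/
import Mathlib


/-- The communication game with potential Φ(S) = Σ ξ_{i,s_i} and
cost u_i(S) = δ_{i,s_i} + N·t_c(S) - t_{i,s_i} is an exact potential game. -/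
theorem communication_game_exact_potential
    {ι : Type*} [Fintype ι] [Nonempty ι] [DecidableEq ι]
    {σ : ι → Type*}
    (δ t : ∀ i, σ i → ℝ)
    (tc : (∀ i, σ i) → ℝ)
    (htc : ∀ S, tc S = Finset.univ.sup' Finset.univ_nonempty (fun j => t j (S j)))
    (Φ : (∀ i, σ i) → ℝ)
    (hΦ : ∀ S, Φ S = ∑ i, (δ i (S i) + (tc S - t i (S i))))
    (u : ∀ i : ι, (∀ j, σ j) → ℝ)
    (hu : ∀ i S, u i S = δ i (S i) + (Fintype.card ι : ℝ) * tc S - t i (S i)) :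
    ∀ (i : ι) (S : ∀ j, σ j) (s' : σ i),
      u i (Function.update S i s') - u i S =
        Φ (Function.update S i s') - Φ S := by
  intro i S s'
  have key : ∀ T : ∀ j, σ j,
      Φ T = (∑ j, δ j (T j)) + (Fintype.card ι : ℝ) * tc T - ∑ j, t j (T j) := by
    intro T
    rw [hΦ]
    rw [Finset.sum_add_distrib, Finset.sum_sub_distrib, Finset.sum_const,
      Finset.card_univ, nsmul_eq_mul]
    ring
  have hsplit : ∀ (f : ∀ j, σ j → ℝ),
      (∑ j, f j (Function.update S i s' j)) - ∑ j, f j (S j) = f i s' - f i (S i) := by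
    intro f
    rw [← Finset.add_sum_erase Finset.univ (fun j => f j (Function.update S i s' j))
      (Finset.mem_univ i),
      ← Finset.add_sum_erase Finset.univ (fun j => f j (S j)) (Finset.mem_univ i)]
    have : ∀ j ∈ Finset.univ.erase i,
        f j (Function.update S i s' j) = f j (S j) := by
      intro j hj
      rw [Function.update_of_ne (Finset.ne_of_mem_erase hj)]
    rw [Finset.sum_congr rfl this, Function.update_self]
    ring
  rw [hu, hu, key, key]
  have h1 := hsplit δ
  have h2 := hsplit t
  simp only [Function.update_self] at *
  linarith
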